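/- Let R be an associative ring with 1 (in particular commutative), I an ideal, n ≥ 3, v ∈ E_n(R,I)·e_1, and w ∈ I^n a column vector with w^t v = 0. Then I_n + v·w^t ∈ E_n(R,I). -/

import Mathlib

/-! Write `v = ε e₁` with `ε ∈ E_n(R, I)` and put `fᵗ = wᵗ ε`. Then `f` has entries in `I` and
`f₁ = wᵗ v = 0`, so `1 + e₁ fᵗ = ∏_{j ≠ 1} e_{1j}(f_j)` lies in `E_n(I)`, and
`ε (1 + e₁ fᵗ) ε⁻¹ = 1 + (ε e₁)(fᵗ ε⁻¹) = 1 + v wᵗ`. -/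

/-- Elementary generators `e_{ij}(x)`, `x ∈ J`, over a (possibly noncommutative)
ring with a two-sided ideal `J`. -/
def elemGens (n : ℕ) (S : Type) [Ring S] (J : TwoSidedIdeal S) :
    Set (Matrix (Fin n) (Fin n) S)ˣ :=
  {g | ∃ i j : Fin n, i ≠ j ∧ ∃ x ∈ J,
    g.val = 1 + Matrix.single i j x}

/-- The elementary subgroup `E_n(S)`. -/
def En (n : ℕ) (S : Type) [Ring S] : Subgroup (Matrix (Fin n) (Fin n) S)ˣ :=
  Subgroup.closure (elemGens n S ⊤)

/-- The relative elementary subgroup `E_n(S, J)`: the normal closure of `E_n(J)`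
in `E_n(S)`. -/
def relEn (n : ℕ) (S : Type) [Ring S] (J : TwoSidedIdeal S) :
    Subgroup (Matrix (Fin n) (Fin n) S)ˣ :=
  Subgroup.closure
    {h | ∃ ε ∈ En n S, ∃ g ∈ Subgroup.closure (elemGens n S J), h = ε * g * ε⁻¹}

open Matrix

theorem Matrix.single_eq_vecMulVec_single {ι R : Type*} [DecidableEq ι] [MulZeroOneClass R]
    (i j : ι) (x : R) :
    single i j x = vecMulVec (Pi.single i 1) (Pi.single j x) := by
  ext a b
  simp only [single_apply, vecMulVec_apply, Pi.single_apply]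
  split_ifs <;> simp_all

section RankOneTransvection

variable {ι R : Type*} [Fintype ι] [DecidableEq ι] [Ring R]

theorem Matrix.one_add_vecMulVec_mul_one_add_vecMulVec {u f g : ι → R} (h : f ⬝ᵥ u = 0) :
    (1 + vecMulVec u f) * (1 + vecMulVec u g) = 1 + vecMulVec u (f + g) := by
  rw [mul_add, add_mul, add_mul, one_mul, mul_one, one_mul, vecMulVec_mul_vecMulVec, h,
    zero_smul, vecMulVec_zero, add_zero, vecMulVec_add, add_assoc]

def rankOneTransvection (u f : ι → R) (h : f ⬝ᵥ u = 0) : (Matrix ι ι R)ˣ where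
  val := 1 + vecMulVec u f
  inv := 1 + vecMulVec u (-f)
  val_inv := by
    rw [one_add_vecMulVec_mul_one_add_vecMulVec h, add_neg_cancel, vecMulVec_zero, add_zero]
  inv_val := by
    rw [one_add_vecMulVec_mul_one_add_vecMulVec (by rw [neg_dotProduct, h, neg_zero]),
      neg_add_cancel, vecMulVec_zero, add_zero]

@[simp]
theorem coe_rankOneTransvection (u f : ι → R) (h : f ⬝ᵥ u = 0) :
    (rankOneTransvection u f h : Matrix ι ι R) = 1 + vecMulVec u f :=
  rfl

theorem rankOneTransvection_zero (u : ι → R) :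
    rankOneTransvection u 0 (zero_dotProduct u) = 1 :=
  Units.ext (by simp)

theorem rankOneTransvection_mul (u : ι → R) {f g : ι → R} (hf : f ⬝ᵥ u = 0)
    (hg : g ⬝ᵥ u = 0) :
    rankOneTransvection u f hf * rankOneTransvection u g hg
      = rankOneTransvection u (f + g) (by rw [add_dotProduct, hf, hg, add_zero]) :=
  Units.ext (one_add_vecMulVec_mul_one_add_vecMulVec hf)

theorem coe_conj_rankOneTransvection (ε : (Matrix ι ι R)ˣ) (u f : ι → R)
    (h : f ⬝ᵥ u = 0) :
    ((ε * rankOneTransvection u f h * ε⁻¹ : (Matrix ι ι R)ˣ) : Matrix ι ι R)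
      = 1 + vecMulVec ((ε : Matrix ι ι R) *ᵥ u) (f ᵥ* (ε⁻¹ : (Matrix ι ι R)ˣ)) := by
  rw [Units.val_mul, Units.val_mul, coe_rankOneTransvection, mul_add, mul_one, add_mul,
    Units.mul_inv, mul_vecMulVec, vecMulVec_mul]

end RankOneTransvection

theorem TwoSidedIdeal.vecMul_apply_mem {m k R : Type*} [Fintype m] [Ring R]
    (I : TwoSidedIdeal R) {w : m → R} (hw : ∀ i, w i ∈ I) (A : Matrix m k R) (j : k) :
    (w ᵥ* A) j ∈ I :=
  sum_mem fun i _ => I.mul_mem_right _ _ (hw i)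

section RelativeElementary

variable {n : ℕ} {R : Type} [Ring R]

theorem closure_elemGens_le_relEn (I : TwoSidedIdeal R) :
    Subgroup.closure (elemGens n R I) ≤ relEn n R I :=
  fun g hg => Subgroup.subset_closure ⟨1, one_mem _, g, hg, by simp⟩

theorem rankOneTransvection_single_mem_closure_elemGens (I : TwoSidedIdeal R) (i : Fin n)
    {f : Fin n → R} (hfi : f ⬝ᵥ Pi.single i 1 = 0) (hf : ∀ j, f j ∈ I) :
    rankOneTransvection (Pi.single i 1) f hfi ∈ Subgroup.closure (elemGens n R I) := by
  let P : (Fin n → R) → Prop := fun g =>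
    ∃ h, rankOneTransvection (Pi.single i 1) g h ∈ Subgroup.closure (elemGens n R I)
  suffices P (∑ j, Pi.single j (f j)) by
    rw [Finset.univ_sum_single] at this
    exact this.2
  have hP0 : P 0 := ⟨zero_dotProduct _, by rw [rankOneTransvection_zero]; exact one_mem _⟩
  refine Finset.sum_induction _ P (fun g g' ⟨hg, mg⟩ ⟨hg', mg'⟩ => ?_) hP0 (fun j _ => ?_)
  · refine ⟨by rw [add_dotProduct, hg, hg', add_zero], ?_⟩
    rw [← rankOneTransvection_mul _ hg hg']
    exact mul_mem mg mg'
  · rcases eq_or_ne j i with rfl | hji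
    · rwa [← dotProduct_single_one f, hfi, Pi.single_zero]
    · refine ⟨by simp [hji.symm], Subgroup.subset_closure ?_⟩
      exact ⟨i, j, hji.symm, f j, hf j, by rw [single_eq_vecMulVec_single]; rfl⟩

end RelativeElementary

/-- If `v ∈ E_n(R,I)·e_1` and `w ∈ I^n` with `wᵗv = 0`, then
`I_n + v·wᵗ ∈ E_n(R,I)`. -/
theorem transvection_in_relElementary (n : ℕ) (hn : 3 ≤ n) (R : Type) [Ring R]
    (I : TwoSidedIdeal R) (v w : Fin n → R)
    (hv : ∃ ε ∈ relEn n R I,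
      v = ε.val.mulVec (Pi.single (⟨0, by omega⟩ : Fin n) 1))
    (hw : ∀ k, w k ∈ I)
    (hvw : dotProduct w v = 0) :
    ∃ g ∈ relEn n R I, g.val = 1 + Matrix.vecMulVec v w := by
  obtain ⟨ε, hε, rfl⟩ := hv
  have hf := (dotProduct_mulVec w ε.val _).symm.trans hvw
  have ht := closure_elemGens_le_relEn I <|
    rankOneTransvection_single_mem_closure_elemGens I _ hf (I.vecMul_apply_mem hw _)
  refine ⟨_, mul_mem (mul_mem hε ht) (inv_mem hε), ?_⟩
  rw [coe_conj_rankOneTransvection, vecMul_vecMul, Units.mul_inv, vecMul_one]
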